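/- Let m ≥ 2, N ≥ 2, C ≥ 0, and let W : ℕ × ℕ → Prop be any predicate. Define Alice's valuations v_A^x for x ∈ {1,…,N} by v_A^x(0) = 0 and v_A^x(s) = C + 10x + 4sx + w(x,s) for s ≥ 1, where w(x,s) = 1 if s > 1 and W(x,s) holds and w(x,s) = 0 otherwise. Define g : {1,…,N} × {1,…,N} → {0,…,m} × {0,…,m} by g(a,b) = (m,0) if a > b, g(a,b) = (1, m−1) if b > a, and g(a,b) = (0,m) if a = b (the first coordinate is Alice's quantity). Then for every b ∈ {2,…,N}, the function a ↦ (first coordinate of g(a,b)) is not implementable for Alice: there is no P : {1,…,N} → ℝ such that v_A^a(g_A(a,b)) − P(a) ≥ v_A^a(g_A(a',b)) − P(a') for all a, a' ∈ {1,…,N}, where g_A(a,b) denotes Alice's quantity under g(a,b). -/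
import Mathlib


open Classical

/-- Alice's `x`-th valuation in the separation construction. -/
noncomputable def vA (C : ℝ) (W : ℕ → ℕ → Prop) (x s : ℕ) : ℝ :=
  if s = 0 then 0
  else C + 10 * (x : ℝ) + 4 * (s : ℝ) * (x : ℝ) + (if 1 < s ∧ W x s then 1 else 0)

/-- Alice's quantity under the polynomial-time `1/2`-approximation algorithm:
all `m` items if `a > b`, one item if `b > a`, and zero items if `a = b`. -/
def gA (m a b : ℕ) : ℕ := if b < a then m else if a < b then 1 else 0

/-- for every fixed valuation index `b ∈ {2,…,N}` of Bob, the map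
`a ↦ gA(a,b)` (Alice's quantity under the `1/2`-approximation algorithm) is not
implementable for Alice: no payment function makes truthful reporting optimal. -/
theorem approximation_algorithm_not_implementable
    (m N : ℕ) (hm : 2 ≤ m) (hN : 2 ≤ N) (C : ℝ) (hC : 0 ≤ C)
    (W : ℕ → ℕ → Prop) (b : ℕ) (hb1 : 2 ≤ b) (hb2 : b ≤ N) :
    ¬ ∃ P : ℕ → ℝ, ∀ a a' : ℕ, 1 ≤ a → a ≤ N → 1 ≤ a' → a' ≤ N →
      vA C W a (gA m a' b) - P a' ≤ vA C W a (gA m a b) - P a := by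
  rintro ⟨P, hP⟩
  have hb1' : 1 ≤ b - 1 := by omega
  have hb2' : b - 1 ≤ N := by omega
  have hblt : b - 1 < b := by omega
  have hg1 : gA m (b - 1) b = 1 := by simp [gA, hblt, Nat.lt_irrefl, not_lt_of_gt hblt]
  have hg0 : gA m b b = 0 := by simp [gA]
  have h1 := hP b (b - 1) (by omega) hb2 hb1' hb2'
  have h2 := hP (b - 1) b hb1' hb2' (by omega) hb2
  rw [hg1, hg0] at h1 h2
  simp only [vA, if_pos rfl, one_ne_zero, if_neg] at h1 h2
  have hw : ¬ (1 < 1 ∧ W b 1) := by simp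
  have hw' : ¬ (1 < 1 ∧ W (b - 1) 1) := by simp
  rw [if_neg hw] at h1
  rw [if_neg hw'] at h2
  have hb : (2 : ℝ) ≤ (b : ℝ) := by exact_mod_cast hb1
  have hbm : ((b - 1 : ℕ) : ℝ) = (b : ℝ) - 1 := by
    have : ((b - 1 : ℕ) : ℝ) + 1 = (b : ℝ) := by
      exact_mod_cast Nat.succ_pred_eq_of_pos (Nat.lt_of_lt_of_le Nat.zero_lt_two hb1)
    linarith
  rw [hbm] at h2
  push_cast at h1 h2
  nlinarith [h1, h2, hC, hb]
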